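/- Suppose a probability measure μ on a group G acting on a space X satisfies: there exist constants a ∈ (0,1), b > 0, N ∈ ℕ with ∫ ht(gx) dμ^{*N}(g) ≤ a·ht(x) + b for all x, and there is C₁ > 1 with C₁⁻¹ ht(x) ≤ ht(gx) ≤ C₁ ht(x) for all g in the support of μ^{*ℓ}, 1 ≤ ℓ ≤ N. Then for all n ≥ 1, x ∈ X, and h > 0, μ^{*n}({g : ht(gx) ≥ h}) ≤ C₁ h⁻¹ (ht(x) + b/(1-a)). -/

import Mathlib

open MeasureTheory

/-- `n`-fold convolution power of a measure on a monoid. -/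
noncomputable def convPow {G : Type*} [Monoid G] [MeasurableSpace G]
    (μ : Measure G) : ℕ → Measure G
  | 0 => Measure.dirac 1
  | n + 1 => (convPow μ n).mconv μ

/-!
Write `Pⁿ f x = ∫ f (g • x) dμ^{*n}(g)`. Disintegrating `μ^{*(j+1)} = μ^{*j} ∗ μ` along its last
factor gives `P^{j+1} f x = ∫ P^j f (u • x) dμ(u)`, so the drift inequality `P^N ht ≤ a ht + b`
propagates to `P^{N+k} ht ≤ a P^k ht + b`. The comparison hypothesis gives `P^ℓ ht ≤ C₁ ht` for
`1 ≤ ℓ ≤ N`, and strong induction then bounds `Pⁿ ht` by `C₁ ht + b / (1 - a)`, the fixed point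
of `t ↦ a t + b` shifted by `C₁ ht`. Markov's inequality finishes.

Where multiplication is not almost everywhere measurable, `Measure.mconv` takes the junk value `0`;
this is why the disintegration lemmas assume the convolution to be nonzero.
-/

lemma integral_dirac_of_aestronglyMeasurable {α F : Type*} [MeasurableSpace α]
    [NormedAddCommGroup F] [NormedSpace ℝ F] [CompleteSpace F] {f : α → F} {a : α}
    (hf : AEStronglyMeasurable f (Measure.dirac a)) :
    ∫ x, f x ∂(Measure.dirac a) = f a := by
  have hfa : f a = hf.mk f a := by
    by_contra hne
    have hnull := ae_iff.mp hf.ae_eq_mk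
    rw [Measure.dirac_apply_of_mem hne] at hnull
    exact one_ne_zero hnull
  rw [integral_congr_ae hf.ae_eq_mk, integral_dirac' _ _ hf.stronglyMeasurable_mk, hfa]

lemma integral_le_of_ae_le_const {α : Type*} [MeasurableSpace α] {ν : Measure α}
    [IsZeroOrProbabilityMeasure ν] {f : α → ℝ} {c : ℝ} (hc : 0 ≤ c) (hf : Integrable f ν)
    (hle : ∀ᵐ x ∂ν, f x ≤ c) : ∫ x, f x ∂ν ≤ c :=
  calc ∫ x, f x ∂ν ≤ ∫ _, c ∂ν := integral_mono_ae hf (integrable_const c) hle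
    _ = ν.real Set.univ * c := by rw [integral_const, smul_eq_mul]
    _ ≤ c := mul_le_of_le_one_left hc measureReal_le_one

lemma le_add_div_one_sub_of_drift {u : ℕ → ℝ} {N : ℕ} {a b c : ℝ} (hN : 1 ≤ N) (ha0 : 0 ≤ a)
    (ha1 : a < 1) (hb : 0 ≤ b) (hc : 0 ≤ c) (hbase : ∀ m, 1 ≤ m → m ≤ N → u m ≤ c)
    (hdrift : ∀ k, u (N + k) ≤ a * u k + b) :
    ∀ m, 1 ≤ m → u m ≤ c + b / (1 - a) := by
  have h1a : 0 < 1 - a := sub_pos.mpr ha1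
  have hfix : a * (c + b / (1 - a)) + b ≤ c + b / (1 - a) := by
    have : a * (b / (1 - a)) + b = b / (1 - a) := by field_simp; ring
    nlinarith
  intro m
  induction m using Nat.strong_induction_on with
  | _ m ih =>
    intro hm
    by_cases hmN : m ≤ N
    · exact (hbase m hm hmN).trans (le_add_of_nonneg_right (div_nonneg hb h1a.le))
    · obtain ⟨k, rfl⟩ := Nat.exists_eq_add_of_lt (not_le.mp hmN)
      calc u (N + (k + 1)) ≤ a * u (k + 1) + b := hdrift (k + 1)
        _ ≤ a * (c + b / (1 - a)) + b := by
          gcongr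
          exact ih (k + 1) (by omega) (by omega)
        _ ≤ c + b / (1 - a) := hfix

section Convolution

variable {M F : Type*} [Monoid M] [MeasurableSpace M] [NormedAddCommGroup F]
  {μ ν : Measure M} {f : M → F}

lemma aemeasurable_mul_of_mconv_ne_zero (h : μ ∗ₘ ν ≠ 0) :
    AEMeasurable (fun p : M × M => p.1 * p.2) (μ.prod ν) := by
  contrapose! h
  exact Measure.map_of_not_aemeasurable h

lemma integrable_comp_mul_of_mconv_ne_zero (h : μ ∗ₘ ν ≠ 0) (hf : Integrable f (μ ∗ₘ ν)) :
    Integrable (fun p : M × M => f (p.1 * p.2)) (μ.prod ν) :=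
  (integrable_map_measure hf.1 (aemeasurable_mul_of_mconv_ne_zero h)).mp hf

variable [NormedSpace ℝ F] [SFinite μ] [SFinite ν]

lemma integral_mconv_symm_of_ne_zero (h : μ ∗ₘ ν ≠ 0) (hf : Integrable f (μ ∗ₘ ν)) :
    ∫ x, f x ∂(μ ∗ₘ ν) = ∫ y, ∫ x, f (x * y) ∂μ ∂ν := by
  rw [Measure.mconv, integral_map (aemeasurable_mul_of_mconv_ne_zero h) hf.1,
    integral_prod_symm _ (integrable_comp_mul_of_mconv_ne_zero h hf)]

lemma Integrable.integral_mconv_right_of_ne_zero (h : μ ∗ₘ ν ≠ 0) (hf : Integrable f (μ ∗ₘ ν)) :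
    Integrable (fun y => ∫ x, f (x * y) ∂μ) ν :=
  (integrable_comp_mul_of_mconv_ne_zero h hf).integral_prod_right

end Convolution

section RandomWalk

variable {G X : Type*} [Monoid G] [MeasurableSpace G] [MulAction G X] (μ : Measure G)

lemma convPow_ne_zero_of_le {m n : ℕ} (hmn : m ≤ n) (h : convPow μ n ≠ 0) : convPow μ m ≠ 0 := by
  induction hmn with
  | refl => exact h
  | step _ ih => exact ih fun h0 => h (by rw [convPow, h0, Measure.zero_mconv])

instance isZeroOrProbabilityMeasure_convPow [IsProbabilityMeasure μ] (n : ℕ) :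
    IsZeroOrProbabilityMeasure (convPow μ n) := by
  induction n with
  | zero => exact inferInstanceAs (IsZeroOrProbabilityMeasure (Measure.dirac (1 : G)))
  | succ n ih =>
    rcases eq_zero_or_isProbabilityMeasure (convPow μ n) with h | h
    · rw [convPow, h, Measure.zero_mconv]
      infer_instance
    · exact inferInstanceAs (IsZeroOrProbabilityMeasure (Measure.map _ _))

noncomputable def convPowAverage (n : ℕ) (f : X → ℝ) (x : X) : ℝ :=
  ∫ g, f (g • x) ∂(convPow μ n)

variable {μ} {f : X → ℝ} {n : ℕ} {x : X}

lemma convPowAverage_nonneg (hf : ∀ x, 0 ≤ f x) : 0 ≤ convPowAverage μ n f x :=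
  integral_nonneg fun _ => hf _

lemma convPowAverage_zero (hf : AEStronglyMeasurable (fun g => f (g • x)) (convPow μ 0)) :
    convPowAverage μ 0 f x = f x := by
  rw [convPowAverage, convPow, integral_dirac_of_aestronglyMeasurable hf, one_smul]

variable [IsProbabilityMeasure μ]

lemma convPowAverage_succ (h : convPow μ (n + 1) ≠ 0)
    (hf : Integrable (fun g => f (g • x)) (convPow μ (n + 1))) :
    convPowAverage μ (n + 1) f x = ∫ u, convPowAverage μ n f (u • x) ∂μ := by
  simp only [convPowAverage, convPow, integral_mconv_symm_of_ne_zero h hf, mul_smul]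

lemma integrable_convPowAverage (h : convPow μ (n + 1) ≠ 0)
    (hf : Integrable (fun g => f (g • x)) (convPow μ (n + 1))) :
    Integrable (fun u => convPowAverage μ n f (u • x)) μ := by
  simpa only [convPowAverage, mul_smul] using Integrable.integral_mconv_right_of_ne_zero h hf

lemma convPowAverage_add_le {a b : ℝ} {N : ℕ} (hf0 : ∀ x, 0 ≤ f x) (ha : 0 ≤ a) (hb : 0 ≤ b)
    (hf : ∀ n x, Integrable (fun g => f (g • x)) (convPow μ n))
    (hdrift : ∀ x, convPowAverage μ N f x ≤ a * f x + b) (k : ℕ) (x : X) :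
    convPowAverage μ (N + k) f x ≤ a * convPowAverage μ k f x + b := by
  induction k generalizing x with
  | zero => simpa only [Nat.add_zero, convPowAverage_zero (hf 0 x).1] using hdrift x
  | succ k ih =>
    rw [← add_assoc]
    by_cases hzero : convPow μ (N + k + 1) = 0
    · rw [convPowAverage, hzero, integral_zero_measure]
      exact add_nonneg (mul_nonneg ha (convPowAverage_nonneg hf0)) hb
    have hzero' : convPow μ (k + 1) ≠ 0 := convPow_ne_zero_of_le μ (by omega) hzero
    have hk := integrable_convPowAverage hzero' (hf _ x)
    rw [convPowAverage_succ hzero (hf _ x), convPowAverage_succ hzero' (hf _ x)]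
    calc ∫ u, convPowAverage μ (N + k) f (u • x) ∂μ
        ≤ ∫ u, (a * convPowAverage μ k f (u • x) + b) ∂μ :=
          integral_mono (integrable_convPowAverage hzero (hf _ x))
            ((hk.const_mul a).add (integrable_const b)) fun u => ih (u • x)
      _ = a * ∫ u, convPowAverage μ k f (u • x) ∂μ + b := by
          rw [integral_add (hk.const_mul a) (integrable_const b), integral_const_mul,
            integral_const, probReal_univ, one_smul]

end RandomWalk

theorem quantitative_nondivergence_general
    {G : Type*} [Group G] [MeasurableSpace G]
    {X : Type*} [MulAction G X]
    (ht : X → ℝ) (hht : ∀ x, 1 ≤ ht x)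
    (μ : Measure G) [IsProbabilityMeasure μ]
    (a b C₁ : ℝ) (ha0 : 0 < a) (ha1 : a < 1) (hb : 0 < b) (hC : 1 < C₁)
    (N : ℕ) (hN : 1 ≤ N)
    (hint : ∀ (n : ℕ) (x : X), Integrable (fun g => ht (g • x)) (convPow μ n))
    (hdrift : ∀ x : X, ∫ g, ht (g • x) ∂(convPow μ N) ≤ a * ht x + b)
    (hcomp : ∀ ℓ : ℕ, 1 ≤ ℓ → ℓ ≤ N →
      ∀ᵐ g ∂(convPow μ ℓ), ∀ x : X,
        C₁⁻¹ * ht x ≤ ht (g • x) ∧ ht (g • x) ≤ C₁ * ht x) :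
    ∀ n : ℕ, 1 ≤ n → ∀ x : X, ∀ h : ℝ, 0 < h →
      ((convPow μ n) {g : G | h ≤ ht (g • x)}).toReal
        ≤ C₁ * h⁻¹ * (ht x + b / (1 - a)) := by
  intro n hn x h hh
  have ht0 : ∀ y, 0 ≤ ht y := fun y => zero_le_one.trans (hht y)
  have hCx : 0 ≤ C₁ * ht x := mul_nonneg (zero_le_one.trans hC.le) (ht0 x)
  have hmean : convPowAverage μ n ht x ≤ C₁ * ht x + b / (1 - a) :=
    le_add_div_one_sub_of_drift hN ha0.le ha1 hb.le hCx
      (fun m hm hmN => integral_le_of_ae_le_const hCx (hint m x)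
        ((hcomp m hm hmN).mono fun g hg => (hg x).2))
      (convPowAverage_add_le ht0 ha0.le hb.le hint hdrift · x) n hn
  have hmarkov := mul_meas_ge_le_integral_of_nonneg (ae_of_all _ fun g => ht0 (g • x)) (hint n x) h
  have hB : b / (1 - a) ≤ C₁ * (b / (1 - a)) :=
    le_mul_of_one_le_left (div_nonneg hb.le (sub_pos.mpr ha1).le) hC.le
  rw [← measureReal_def, mul_right_comm, ← div_eq_mul_inv, le_div_iff₀ hh, mul_comm]
  calc h * (convPow μ n).real {g | h ≤ ht (g • x)} ≤ convPowAverage μ n ht x := hmarkov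
    _ ≤ C₁ * (ht x + b / (1 - a)) := by linarith

/-- quantitative non-divergence from the contraction hypothesis. -/
theorem quantitative_nondivergence
    {G : Type*} [Group G] [MeasurableSpace G]
    {X : Type*} [MeasurableSpace X] [MulAction G X] [MeasurableSMul G X]
    (ht : X → ℝ) (hht : ∀ x, 1 ≤ ht x) (hmeas : Measurable ht)
    (μ : Measure G) [IsProbabilityMeasure μ]
    (a b C₁ : ℝ) (ha0 : 0 < a) (ha1 : a < 1) (hb : 0 < b) (hC : 1 < C₁)
    (N : ℕ) (hN : 1 ≤ N)
    (hint : ∀ (n : ℕ) (x : X), Integrable (fun g => ht (g • x)) (convPow μ n))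
    (hdrift : ∀ x : X, ∫ g, ht (g • x) ∂(convPow μ N) ≤ a * ht x + b)
    (hcomp : ∀ ℓ : ℕ, 1 ≤ ℓ → ℓ ≤ N →
      ∀ᵐ g ∂(convPow μ ℓ), ∀ x : X,
        C₁⁻¹ * ht x ≤ ht (g • x) ∧ ht (g • x) ≤ C₁ * ht x) :
    ∀ n : ℕ, 1 ≤ n → ∀ x : X, ∀ h : ℝ, 0 < h →
      ((convPow μ n) {g : G | h ≤ ht (g • x)}).toReal
        ≤ C₁ * h⁻¹ * (ht x + b / (1 - a)) :=
  quantitative_nondivergence_general ht hht μ a b C₁ ha0 ha1 hb hC N hN hint hdrift hcomp
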